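/- arXiv:2305.13493 — 3 statements merged into one kernel-verified Lean document; each statement's English description precedes it below -/
import Mathlib

section
/- Let μ and ν be probability measures on a measurable space Ω with μ absolutely continuous with respect to ν, finite Kullback–Leibler divergence KL(μ‖ν), and Radon–Nikodym derivative dμ/dν strictly positive ν-almost everywhere. Then the supremum, over all measurable functions D : Ω → ℝ that are strictly positive ν-almost everywhere with log∘D μ-integrable and D ν-integrable, of ∫ log(D) dμ − ∫ D dν + 1 equals KL(μ‖ν). -/
open MeasureTheory Real

/-!
With `f = dμ/dν`, every admissible `D` satisfies, `μ`-a.e., `log D - log f = log (D / f) ≤ D / f - 1`,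
and `∫ D / f dμ = ∫ D dν` because `μ = f • ν` with `f > 0` `ν`-a.e. Integrating gives
`∫ log D dμ - ∫ D dν + 1 ≤ ∫ log f dμ`, and `D = f` attains the bound since `∫ f dν = 1`.
-/

section DivRnDeriv

variable {Ω : Type*} [MeasurableSpace Ω] {μ ν : Measure Ω}

lemma toReal_rnDeriv_mul_div_ae_eq (hpos : ∀ᵐ ω ∂ν, (μ.rnDeriv ν ω).toReal ≠ 0) (D : Ω → ℝ) :
    (fun ω => (μ.rnDeriv ν ω).toReal * (D ω / (μ.rnDeriv ν ω).toReal)) =ᵐ[ν] D :=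
  hpos.mono fun ω h => mul_div_cancel₀ (D ω) h

variable [Measure.HaveLebesgueDecomposition μ ν] [SigmaFinite μ]

lemma integrable_div_toReal_rnDeriv (hac : μ ≪ ν)
    (hpos : ∀ᵐ ω ∂ν, (μ.rnDeriv ν ω).toReal ≠ 0) {D : Ω → ℝ} (hD : Integrable D ν) :
    Integrable (fun ω => D ω / (μ.rnDeriv ν ω).toReal) μ :=
  (integrable_toReal_rnDeriv_mul_iff hac).1 (hD.congr (toReal_rnDeriv_mul_div_ae_eq hpos D).symm)

lemma integral_div_toReal_rnDeriv (hac : μ ≪ ν)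
    (hpos : ∀ᵐ ω ∂ν, (μ.rnDeriv ν ω).toReal ≠ 0) (D : Ω → ℝ) :
    ∫ ω, D ω / (μ.rnDeriv ν ω).toReal ∂μ = ∫ ω, D ω ∂ν := by
  rw [← integral_toReal_rnDeriv_mul hac]
  exact integral_congr_ae (toReal_rnDeriv_mul_div_ae_eq hpos D)

end DivRnDeriv

lemma log_sub_log_le_div_sub_one {a b : ℝ} (ha : 0 < a) (hb : 0 < b) :
    log a - log b ≤ a / b - 1 := by
  rw [← log_div ha.ne' hb.ne']
  exact log_le_sub_one_of_pos (div_pos ha hb)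

theorem integral_log_sub_integral_add_one_le_integral_log_rnDeriv {Ω : Type*}
    [MeasurableSpace Ω] {μ ν : Measure Ω} [IsProbabilityMeasure μ]
    [Measure.HaveLebesgueDecomposition μ ν] (hac : μ ≪ ν)
    (hKL : Integrable (fun ω => log ((μ.rnDeriv ν ω).toReal)) μ)
    (hpos : ∀ᵐ ω ∂ν, 0 < (μ.rnDeriv ν ω).toReal) {D : Ω → ℝ} (hDpos : ∀ᵐ ω ∂ν, 0 < D ω)
    (hlogD : Integrable (fun ω => log (D ω)) μ) (hD : Integrable D ν) :
    ∫ ω, log (D ω) ∂μ - ∫ ω, D ω ∂ν + 1 ≤ ∫ ω, log ((μ.rnDeriv ν ω).toReal) ∂μ := by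
  have hne : ∀ᵐ ω ∂ν, (μ.rnDeriv ν ω).toReal ≠ 0 := hpos.mono fun _ h => h.ne'
  have hratio := integrable_div_toReal_rnDeriv hac hne hD
  have pointwise : ∫ ω, (log (D ω) - log ((μ.rnDeriv ν ω).toReal)) ∂μ
      ≤ ∫ ω, (D ω / (μ.rnDeriv ν ω).toReal - 1) ∂μ := by
    refine integral_mono_ae (hlogD.sub hKL) (hratio.sub (integrable_const 1)) ?_
    filter_upwards [hac.ae_le hpos, hac.ae_le hDpos] with ω hf hDω
    exact log_sub_log_le_div_sub_one hDω hf
  rw [integral_sub hlogD hKL, integral_sub hratio (integrable_const 1),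
    integral_div_toReal_rnDeriv hac hne, integral_const, probReal_univ, one_smul] at pointwise
  linarith

/-- Let `μ, ν` be probability measures with `μ ≪ ν`, finite KL divergence
`KL(μ‖ν) = ∫ log (dμ/dν) dμ` (finiteness expressed as integrability of `log (dμ/dν)`
with respect to `μ`), and `dμ/dν > 0` `ν`-a.e. The supremum over all measurable
`D : Ω → ℝ` that are `ν`-a.e. strictly positive, with `log ∘ D` `μ`-integrable and `D`
`ν`-integrable, of `∫ log D dμ - ∫ D dν + 1` equals `KL(μ‖ν)` (as an attained
supremum, `IsGreatest`). -/
theorem stmt6 {Ω : Type*} [MeasurableSpace Ω] (μ ν : Measure Ω)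
    [IsProbabilityMeasure μ] [IsProbabilityMeasure ν]
    (hac : μ ≪ ν)
    (hKL : Integrable (fun ω => log ((μ.rnDeriv ν ω).toReal)) μ)
    (hpos : ∀ᵐ ω ∂ν, 0 < (μ.rnDeriv ν ω).toReal) :
    IsGreatest
      {v : ℝ | ∃ D : Ω → ℝ, Measurable D ∧ (∀ᵐ ω ∂ν, 0 < D ω) ∧
        Integrable (fun ω => log (D ω)) μ ∧ Integrable D ν ∧
        v = ∫ ω, log (D ω) ∂μ - ∫ ω, D ω ∂ν + 1}
      (∫ ω, log ((μ.rnDeriv ν ω).toReal) ∂μ) := by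
  refine ⟨⟨_, (μ.measurable_rnDeriv ν).ennreal_toReal, hpos, hKL,
    Measure.integrable_toReal_rnDeriv, ?_⟩, ?_⟩
  · rw [Measure.integral_toReal_rnDeriv hac, probReal_univ]
    ring
  · rintro v ⟨D, -, hDpos, hlogD, hD, rfl⟩
    exact integral_log_sub_integral_add_one_le_integral_log_rnDeriv hac hKL hpos hDpos hlogD hD
end

section
/- Let X and Y be measurable spaces, κ a Markov kernel from X to Y, and let M be a set of probability measures μ on X such that for each μ ∈ M the joint law π_μ = μ ⊗ κ is absolutely continuous with respect to the product of marginals ρ_μ = μ × (κ ∘ μ), with dπ_μ/dρ_μ strictly positive ρ_μ-a.e. and I(μ) := KL(π_μ‖ρ_μ) < ∞. Define for α > 0 and admissible discriminators D (measurable D : X × Y → ℝ, strictly positive ρ_μ-a.e., log∘D π_μ-integrable, D ρ_μ-integrable) the value J_α(μ, D) = α·∫ log(D) dπ_μ − ∫ D dρ_μ. Then sup_{μ ∈ M} sup_D J_α(μ, D) / α + 1 − log(α) = sup_{μ ∈ M} I(μ); that is, the CORTICAL game recovers the channel capacity C = sup_{μ ∈ M} I(μ). -/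
/-!
For fixed `μ`, the CORTICAL value `J_α(D) = α ∫ log D dπ - ∫ D dρ` is maximised by the
discriminator `D* = α · dπ/dρ`: the pointwise inequality `log x ≤ log y + x / y - 1` with
`x = D`, `y = α · dπ/dρ`, integrated against `π` after the change of measure
`∫ D dρ = ∫ D / (dπ/dρ) dπ`, gives `J_α(D) ≤ α (I(μ) + log α - 1) = J_α(D*)`.
Taking the supremum over `μ` of this increasing affine function of `I(μ)` yields
`α (C + log α - 1)`, which renormalises to `C`.
-/

open MeasureTheory ProbabilityTheory

noncomputable def jointLaw {X Y : Type*} [MeasurableSpace X] [MeasurableSpace Y]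
    (κ : Kernel X Y) (μ : Measure X) : Measure (X × Y) :=
  μ ⊗ₘ κ

/-- The product `μ × (κ ∘ μ)` of the input law `μ` and the output law `κ ∘ μ = μ.bind κ`. -/
noncomputable def margLaw {X Y : Type*} [MeasurableSpace X] [MeasurableSpace Y]
    (κ : Kernel X Y) (μ : Measure X) : Measure (X × Y) :=
  μ.prod (μ.bind (fun x => κ x))

/-- The mutual information `I(μ) = KL(μ⊗κ ‖ μ×(κ∘μ)) = ∫ log (dπ_μ/dρ_μ) dπ_μ`. -/
noncomputable def mutInfo {X Y : Type*} [MeasurableSpace X] [MeasurableSpace Y]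
    (κ : Kernel X Y) (μ : Measure X) : ℝ :=
  ∫ ω, Real.log (((jointLaw κ μ).rnDeriv (margLaw κ μ) ω).toReal) ∂(jointLaw κ μ)

lemma Real.log_le_log_add_div_sub_one {x y : ℝ} (hx : 0 < x) (hy : 0 < y) :
    Real.log x ≤ Real.log y + x / y - 1 := by
  have h := Real.log_le_sub_one_of_pos (div_pos hx hy)
  rw [Real.log_div hx.ne' hy.ne'] at h
  linarith

instance {X Y : Type*} [MeasurableSpace X] [MeasurableSpace Y] (κ : Kernel X Y)
    [IsMarkovKernel κ] (μ : Measure X) [IsProbabilityMeasure μ] :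
    IsProbabilityMeasure (jointLaw κ μ) :=
  inferInstanceAs (IsProbabilityMeasure (μ ⊗ₘ κ))

instance {X Y : Type*} [MeasurableSpace X] [MeasurableSpace Y] (κ : Kernel X Y)
    [IsMarkovKernel κ] (μ : Measure X) [IsProbabilityMeasure μ] :
    IsProbabilityMeasure (margLaw κ μ) :=
  inferInstanceAs (IsProbabilityMeasure (μ.prod (κ ∘ₘ μ)))

namespace MeasureTheory.Measure

variable {Ω : Type*} [MeasurableSpace Ω] {π ρ : Measure Ω} {D : Ω → ℝ}

lemma toReal_rnDeriv_mul_div_ae_eq (hpos : ∀ᵐ ω ∂ρ, 0 < (π.rnDeriv ρ ω).toReal) :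
    (fun ω ↦ (π.rnDeriv ρ ω).toReal * (D ω / (π.rnDeriv ρ ω).toReal)) =ᵐ[ρ] D := by
  filter_upwards [hpos] with ω hω
  exact mul_div_cancel₀ (D ω) hω.ne'

variable [SigmaFinite π] [SigmaFinite ρ]

lemma integrable_div_toReal_rnDeriv (hac : π ≪ ρ)
    (hpos : ∀ᵐ ω ∂ρ, 0 < (π.rnDeriv ρ ω).toReal) (hD : Integrable D ρ) :
    Integrable (fun ω ↦ D ω / (π.rnDeriv ρ ω).toReal) π :=
  (integrable_toReal_rnDeriv_mul_iff hac).mp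
    (hD.congr (toReal_rnDeriv_mul_div_ae_eq hpos).symm)

lemma integral_div_toReal_rnDeriv (hac : π ≪ ρ)
    (hpos : ∀ᵐ ω ∂ρ, 0 < (π.rnDeriv ρ ω).toReal) :
    ∫ ω, D ω / (π.rnDeriv ρ ω).toReal ∂π = ∫ ω, D ω ∂ρ := by
  rw [← integral_toReal_rnDeriv_mul hac]
  exact integral_congr_ae (toReal_rnDeriv_mul_div_ae_eq hpos)

end MeasureTheory.Measure

open Measure

/-- The paper's `J_α(μ, D)`, with `π = π_μ` and `ρ = ρ_μ`. -/
noncomputable def corticalValue {Ω : Type*} [MeasurableSpace Ω] (α : ℝ) (π ρ : Measure Ω)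
    (D : Ω → ℝ) : ℝ :=
  α * ∫ ω, Real.log (D ω) ∂π - ∫ ω, D ω ∂ρ

section Discriminator

variable {Ω : Type*} [MeasurableSpace Ω] {π ρ : Measure Ω} [IsProbabilityMeasure π]
  [SigmaFinite ρ] {α : ℝ}

lemma corticalValue_le (hac : π ≪ ρ) (hpos : ∀ᵐ ω ∂ρ, 0 < (π.rnDeriv ρ ω).toReal)
    (hlogp : Integrable (fun ω ↦ Real.log (π.rnDeriv ρ ω).toReal) π) (hα : 0 < α)
    {D : Ω → ℝ} (hDpos : ∀ᵐ ω ∂ρ, 0 < D ω) (hlogD : Integrable (fun ω ↦ Real.log (D ω)) π)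
    (hD : Integrable D ρ) :
    corticalValue α π ρ D
      ≤ α * (∫ ω, Real.log (π.rnDeriv ρ ω).toReal ∂π + Real.log α - 1) := by
  set p : Ω → ℝ := fun ω ↦ (π.rnDeriv ρ ω).toReal
  have hDp : Integrable (fun ω ↦ D ω / p ω) π := integrable_div_toReal_rnDeriv hac hpos hD
  have hpointwise : ∀ᵐ ω ∂π,
      Real.log (D ω) ≤ Real.log α + Real.log (p ω) + (D ω / p ω / α - 1) := by
    filter_upwards [hac.ae_le hpos, hac.ae_le hDpos] with ω hp hDω
    have h := Real.log_le_log_add_div_sub_one hDω (mul_pos hα hp)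
    rw [Real.log_mul hα.ne' hp.ne', div_mul_eq_div_div_swap] at h
    linarith
  have hlog_αp : Integrable (fun ω ↦ Real.log α + Real.log (p ω)) π :=
    (integrable_const _).add hlogp
  have hratio : Integrable (fun ω ↦ D ω / p ω / α - 1) π :=
    (hDp.div_const α).sub (integrable_const 1)
  have hintegrated : ∫ ω, Real.log (D ω) ∂π
      ≤ ∫ ω, (Real.log α + Real.log (p ω) + (D ω / p ω / α - 1)) ∂π :=
    integral_mono_ae hlogD (hlog_αp.add hratio) hpointwise
  rw [integral_add hlog_αp hratio, integral_add (integrable_const _) hlogp,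
    integral_sub (hDp.div_const α) (integrable_const 1),
    integral_div, integral_div_toReal_rnDeriv hac hpos] at hintegrated
  simp only [integral_const, probReal_univ, one_smul] at hintegrated
  have hscaled := mul_le_mul_of_nonneg_left hintegrated hα.le
  rw [corticalValue]
  field_simp at hscaled
  linarith

lemma corticalValue_const_mul_rnDeriv (hac : π ≪ ρ)
    (hlogp : Integrable (fun ω ↦ Real.log (π.rnDeriv ρ ω).toReal) π) (hα : 0 < α) :
    Integrable (fun ω ↦ Real.log (α * (π.rnDeriv ρ ω).toReal)) π ∧
      corticalValue α π ρ (fun ω ↦ α * (π.rnDeriv ρ ω).toReal)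
        = α * (∫ ω, Real.log (π.rnDeriv ρ ω).toReal ∂π + Real.log α - 1) := by
  have hlog_mul : (fun ω ↦ Real.log α + Real.log (π.rnDeriv ρ ω).toReal)
      =ᵐ[π] fun ω ↦ Real.log (α * (π.rnDeriv ρ ω).toReal) := by
    filter_upwards [rnDeriv_pos hac, hac.ae_le (rnDeriv_lt_top π ρ)] with ω h0 htop
    rw [Real.log_mul hα.ne' (ENNReal.toReal_pos h0.ne' htop.ne).ne']
  refine ⟨((integrable_const _).add hlogp).congr hlog_mul, ?_⟩
  rw [corticalValue, ← integral_congr_ae hlog_mul, integral_add (integrable_const _) hlogp,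
    integral_const_mul, integral_toReal_rnDeriv hac]
  simp only [integral_const, probReal_univ, one_smul]
  ring

lemma isGreatest_corticalValue (hac : π ≪ ρ) (hpos : ∀ᵐ ω ∂ρ, 0 < (π.rnDeriv ρ ω).toReal)
    (hlogp : Integrable (fun ω ↦ Real.log (π.rnDeriv ρ ω).toReal) π) (hα : 0 < α) :
    IsGreatest {v : ℝ | ∃ D : Ω → ℝ, Measurable D ∧ (∀ᵐ ω ∂ρ, 0 < D ω) ∧
        Integrable (fun ω ↦ Real.log (D ω)) π ∧ Integrable D ρ ∧ v = corticalValue α π ρ D}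
      (α * (∫ ω, Real.log (π.rnDeriv ρ ω).toReal ∂π + Real.log α - 1)) := by
  obtain ⟨hlog, hvalue⟩ := corticalValue_const_mul_rnDeriv (ρ := ρ) hac hlogp hα
  refine ⟨⟨_, measurable_const.mul (measurable_rnDeriv π ρ).ennreal_toReal, ?_, hlog,
    integrable_toReal_rnDeriv.const_mul α, hvalue.symm⟩, ?_⟩
  · filter_upwards [hpos] with ω hω
    exact mul_pos hα hω
  · rintro _ ⟨D, -, hDpos, hlogD, hD, rfl⟩
    exact corticalValue_le hac hpos hlogp hα hDpos hlogD hD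

end Discriminator

/-- Theorem 1 of the paper: for a Markov kernel (channel) `κ` and a nonempty family `M`
of admissible input probability laws `μ` (each with `π_μ = μ ⊗ κ ≪ ρ_μ = μ × (κ ∘ μ)`,
`dπ_μ/dρ_μ > 0` `ρ_μ`-a.e. and finite mutual information `I(μ) = KL(π_μ‖ρ_μ)`, the
family having bounded mutual information so that the capacity is finite), and any
`α > 0`, the supremum over `μ ∈ M` and over admissible discriminators `D` of the
CORTICAL value `J_α(μ, D) = α ∫ log D dπ_μ - ∫ D dρ_μ`, renormalized via
`v ↦ v / α + 1 - log α`, equals the channel capacity `C = sup_{μ ∈ M} I(μ)`. -/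
theorem stmt9 {X Y : Type*} [MeasurableSpace X] [MeasurableSpace Y]
    (κ : Kernel X Y) [IsMarkovKernel κ]
    (M : Set (Measure X))
    (hprob : ∀ μ ∈ M, IsProbabilityMeasure μ)
    (hac : ∀ μ ∈ M, jointLaw κ μ ≪ margLaw κ μ)
    (hpos : ∀ μ ∈ M, ∀ᵐ ω ∂(margLaw κ μ),
      0 < (((jointLaw κ μ).rnDeriv (margLaw κ μ)) ω).toReal)
    (hKL : ∀ μ ∈ M, Integrable
      (fun ω => Real.log (((jointLaw κ μ).rnDeriv (margLaw κ μ) ω).toReal)) (jointLaw κ μ))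
    (hne : M.Nonempty)
    (hbdd : BddAbove (mutInfo κ '' M))
    (α : ℝ) (hα : 0 < α) :
    sSup {v : ℝ | ∃ μ ∈ M, ∃ D : X × Y → ℝ, Measurable D ∧
        (∀ᵐ ω ∂(margLaw κ μ), 0 < D ω) ∧
        Integrable (fun ω => Real.log (D ω)) (jointLaw κ μ) ∧
        Integrable D (margLaw κ μ) ∧
        v = α * ∫ ω, Real.log (D ω) ∂(jointLaw κ μ) - ∫ ω, D ω ∂(margLaw κ μ)}
      / α + 1 - Real.log α
      = sSup (mutInfo κ '' M) := by
  set g : ℝ → ℝ := fun t ↦ α * (t + Real.log α - 1)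
  have hgreatest : ∀ μ ∈ M, IsGreatest _ (g (mutInfo κ μ)) := fun μ hμ ↦ by
    have := hprob μ hμ
    exact isGreatest_corticalValue (hac μ hμ) (hpos μ hμ) (hKL μ hμ) hα
  rw [show sSup _ = g (sSup (mutInfo κ '' M)) from ?_]
  · field_simp
    ring
  · have hg : Monotone g := fun s t hst ↦ by dsimp only [g]; gcongr
    rw [hg.map_csSup_of_continuousAt (by fun_prop) (hne.image _) hbdd, Set.image_image]
    refine csSup_eq_csSup_of_forall_exists_le ?_ ?_
    · rintro _ ⟨μ, hμ, D, hDm, hDpos, hlogD, hD, rfl⟩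
      exact ⟨_, ⟨μ, hμ, rfl⟩, (hgreatest μ hμ).2 ⟨D, hDm, hDpos, hlogD, hD, rfl⟩⟩
    · rintro _ ⟨μ, hμ, rfl⟩
      obtain ⟨D, hD⟩ := (hgreatest μ hμ).1
      exact ⟨_, ⟨μ, hμ, D, hD⟩, le_rfl⟩
end

section
/- Let μ and ν be probability measures on a measurable space Ω with μ absolutely continuous with respect to ν, finite KL(μ‖ν), and dμ/dν strictly positive ν-almost everywhere. For α > 0, the supremum over admissible discriminators D of α·∫ log(D) dμ − ∫ D dν, after the affine renormalization S(α) = (sup value)/α + 1 − log(α), is independent of α and equals KL(μ‖ν); i.e., for all α, β > 0, S(α) = S(β) = KL(μ‖ν). -/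
/-!
For `r = dμ/dν` and any admissible `D`, the inequality `log x ≤ x - 1` at `x = D / (α r)`,
integrated against `μ`, gives `α ∫ log D dμ - ∫ D dν ≤ α (log α - 1 + KL(μ‖ν))`, because
`∫ D / r dμ = ∫ D dν`. Equality holds for `D = α r`, so the supremum is attained and equals
`α (log α - 1 + KL(μ‖ν))`; the renormalization `S(α)` cancels exactly the `α`-dependence.
-/

open MeasureTheory Real

namespace MeasureTheory.Measure

variable {Ω : Type*} [MeasurableSpace Ω] {μ ν : Measure Ω}

lemma toReal_rnDeriv_mul_div_ae_eq_s11 (hpos : ∀ᵐ ω ∂ν, 0 < (μ.rnDeriv ν ω).toReal) (f : Ω → ℝ) :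
    (fun ω => (μ.rnDeriv ν ω).toReal * (f ω / (μ.rnDeriv ν ω).toReal)) =ᵐ[ν] f := by
  filter_upwards [hpos] with ω hω
  exact mul_div_cancel₀ _ hω.ne'

section RnDeriv

variable [SigmaFinite μ] [SigmaFinite ν]

lemma integrable_div_toReal_rnDeriv_s11 (hac : μ ≪ ν)
    (hpos : ∀ᵐ ω ∂ν, 0 < (μ.rnDeriv ν ω).toReal) {f : Ω → ℝ} (hf : Integrable f ν) :
    Integrable (fun ω => f ω / (μ.rnDeriv ν ω).toReal) μ :=
  (integrable_toReal_rnDeriv_mul_iff hac).mp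
    (hf.congr (toReal_rnDeriv_mul_div_ae_eq_s11 hpos f).symm)

lemma integral_div_toReal_rnDeriv_s11 (hac : μ ≪ ν)
    (hpos : ∀ᵐ ω ∂ν, 0 < (μ.rnDeriv ν ω).toReal) (f : Ω → ℝ) :
    ∫ ω, f ω / (μ.rnDeriv ν ω).toReal ∂μ = ∫ ω, f ω ∂ν := by
  rw [← integral_toReal_rnDeriv_mul hac, integral_congr_ae (toReal_rnDeriv_mul_div_ae_eq_s11 hpos f)]

end RnDeriv

lemma log_const_mul_toReal_rnDeriv_ae_eq (hac : μ ≪ ν)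
    (hpos : ∀ᵐ ω ∂ν, 0 < (μ.rnDeriv ν ω).toReal) {c : ℝ} (hc : 0 < c) :
    (fun ω => log (c * (μ.rnDeriv ν ω).toReal)) =ᵐ[μ]
      fun ω => log c + log (μ.rnDeriv ν ω).toReal := by
  filter_upwards [hac.ae_le hpos] with ω hω
  exact log_mul hc.ne' hω.ne'

lemma integral_log_le_integral_log_rnDeriv_add [IsFiniteMeasure μ] [SigmaFinite ν]
    (hac : μ ≪ ν) (hpos : ∀ᵐ ω ∂ν, 0 < (μ.rnDeriv ν ω).toReal)
    (hKL : Integrable (fun ω => log (μ.rnDeriv ν ω).toReal) μ) {c : ℝ} (hc : 0 < c)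
    {D : Ω → ℝ} (hD : ∀ᵐ ω ∂ν, 0 < D ω) (hlogD : Integrable (fun ω => log (D ω)) μ)
    (hDint : Integrable D ν) :
    ∫ ω, log (D ω) ∂μ ≤
      ∫ ω, log (μ.rnDeriv ν ω).toReal ∂μ + (∫ ω, D ω ∂ν) / c + (log c - 1) * μ.real Set.univ := by
  set r : Ω → ℝ := fun ω => (μ.rnDeriv ν ω).toReal
  have hpointwise : ∀ᵐ ω ∂μ, log (D ω) - log (r ω) ≤ D ω / r ω / c + (log c - 1) := by
    filter_upwards [hac.ae_le hpos, hac.ae_le hD] with ω hr hDω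
    have hcr : 0 < c * r ω := mul_pos hc hr
    have := log_le_sub_one_of_pos (div_pos hDω hcr)
    rw [log_div hDω.ne' hcr.ne', log_mul hc.ne' hr.ne', mul_comm c, ← div_div] at this
    linarith
  have hmono := integral_mono_ae (f := fun ω => log (D ω) - log (r ω))
    (g := fun ω => D ω / r ω / c + (log c - 1)) (hlogD.sub hKL)
    (((integrable_div_toReal_rnDeriv_s11 hac hpos hDint).div_const c).add (integrable_const _))
    hpointwise
  rw [integral_sub hlogD hKL, integral_add _ (integrable_const _), integral_div,
    integral_div_toReal_rnDeriv_s11 hac hpos, integral_const, smul_eq_mul, mul_comm] at hmono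
  · linarith
  · exact (integrable_div_toReal_rnDeriv_s11 hac hpos hDint).div_const c

end MeasureTheory.Measure

open MeasureTheory.Measure

def discriminatorValues {Ω : Type*} [MeasurableSpace Ω] (μ ν : Measure Ω) (α : ℝ) : Set ℝ :=
  {v : ℝ | ∃ D : Ω → ℝ, Measurable D ∧ (∀ᵐ ω ∂ν, 0 < D ω) ∧
    Integrable (fun ω => Real.log (D ω)) μ ∧ Integrable D ν ∧
    v = α * ∫ ω, Real.log (D ω) ∂μ - ∫ ω, D ω ∂ν}

lemma isGreatest_discriminatorValues {Ω : Type*} [MeasurableSpace Ω] {μ ν : Measure Ω}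
    [IsProbabilityMeasure μ] [IsProbabilityMeasure ν] (hac : μ ≪ ν)
    (hKL : Integrable (fun ω => log (μ.rnDeriv ν ω).toReal) μ)
    (hpos : ∀ᵐ ω ∂ν, 0 < (μ.rnDeriv ν ω).toReal) {α : ℝ} (hα : 0 < α) :
    IsGreatest (discriminatorValues μ ν α)
      (α * (log α - 1 + ∫ ω, log (μ.rnDeriv ν ω).toReal ∂μ)) := by
  have hlog := log_const_mul_toReal_rnDeriv_ae_eq hac hpos hα
  constructor
  · refine ⟨fun ω => α * (μ.rnDeriv ν ω).toReal,
      (measurable_rnDeriv μ ν).ennreal_toReal.const_mul α, ?_,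
      ((integrable_const _).add hKL).congr hlog.symm, integrable_toReal_rnDeriv.const_mul α, ?_⟩
    · filter_upwards [hpos] with ω hω
      exact mul_pos hα hω
    · rw [integral_congr_ae hlog, integral_add (integrable_const _) hKL, integral_const_mul,
        integral_toReal_rnDeriv hac]
      simp only [integral_const, probReal_univ, smul_eq_mul, one_mul]
      ring
  · rintro v ⟨D, -, hD, hlogD, hDint, rfl⟩
    have := integral_log_le_integral_log_rnDeriv_add hac hpos hKL hα hD hlogD hDint
    rw [probReal_univ, mul_one] at this
    have := mul_le_mul_of_nonneg_left this hα.le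
    rw [mul_add, mul_add, mul_div_cancel₀ _ hα.ne'] at this
    linarith

/-- Let `μ, ν` be probability measures with `μ ≪ ν`, finite KL divergence
`KL(μ‖ν) = ∫ log (dμ/dν) dμ` (finiteness expressed as integrability of `log (dμ/dν)`
with respect to `μ`), and `dμ/dν > 0` `ν`-a.e. For `α > 0`, let `S(α)` be the supremum
over admissible discriminators `D` (measurable, `ν`-a.e. strictly positive, `log ∘ D`
`μ`-integrable, `D` `ν`-integrable) of `α ∫ log D dμ - ∫ D dν`, renormalized as
`S(α) = (sup value)/α + 1 - log α`. Then `S` is independent of `α` and equals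
`KL(μ‖ν)`: for all `α, β > 0`, `S(α) = KL(μ‖ν)` and `S(β) = KL(μ‖ν)`. -/
theorem stmt11 {Ω : Type*} [MeasurableSpace Ω] (μ ν : Measure Ω)
    [IsProbabilityMeasure μ] [IsProbabilityMeasure ν]
    (hac : μ ≪ ν)
    (hKL : Integrable (fun ω => Real.log ((μ.rnDeriv ν ω).toReal)) μ)
    (hpos : ∀ᵐ ω ∂ν, 0 < (μ.rnDeriv ν ω).toReal)
    (S : ℝ → ℝ)
    (hS : ∀ α : ℝ, 0 < α → S α =
      sSup {v : ℝ | ∃ D : Ω → ℝ, Measurable D ∧ (∀ᵐ ω ∂ν, 0 < D ω) ∧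
        Integrable (fun ω => Real.log (D ω)) μ ∧ Integrable D ν ∧
        v = α * ∫ ω, Real.log (D ω) ∂μ - ∫ ω, D ω ∂ν} / α + 1 - Real.log α) :
    ∀ α β : ℝ, 0 < α → 0 < β →
      S α = ∫ ω, Real.log ((μ.rnDeriv ν ω).toReal) ∂μ ∧
      S β = ∫ ω, Real.log ((μ.rnDeriv ν ω).toReal) ∂μ := by
  have hS_eq_KL (α : ℝ) (hα : 0 < α) : S α = ∫ ω, log (μ.rnDeriv ν ω).toReal ∂μ := by
    rw [hS α hα, ← discriminatorValues, (isGreatest_discriminatorValues hac hKL hpos hα).csSup_eq]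
    field_simp
    ring
  exact fun α β hα hβ => ⟨hS_eq_KL α hα, hS_eq_KL β hβ⟩
end
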